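/- For every integer j ≥ 2 and every real s > 0, Π_{k=1}^{j−1} [ (∫_0^1 t^{s−1+k/j} (1−t)^{k/(j(j−1)) − 1} dt) / B(k/j + 1, k/(j(j−1))) ] = (1/√(2π)) · (1/√(j(j−1))) · [j^{j}/(j−1)^{j−1}] · Π_{k=1}^{j−1} [Γ(s + k/j)/Γ(s + k/(j−1))]. -/

import Mathlib

/-!
Each factor is a ratio of Beta functions `B(s + k/j, c) / B(k/j + 1, c)` with `c = k/(j(j-1))`,
and since `k/j + c = k/(j-1)` it splits as `Γ(s + k/j) / Γ(s + k/(j-1))` times the constant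
`Γ(k/(j-1) + 1) / Γ(k/j + 1)`. The product of these constants is computed from Gauss's
multiplication formula at `1/n`, `∏_{0<k<n} Γ(k/n) = (2π)^((n-1)/2) / √n`: by Euler's reflection
formula its square is `(2π)^(n-1) / ∏_{0<k<n} 2 sin(πk/n)`, and that sine product is `n`, being
the modulus of `∏_{0<k<n} (1 - ζ^k)` for a primitive `n`-th root of unity `ζ`.
-/

open Real

noncomputable def betaFn (a b : ℝ) : ℝ :=
  Real.Gamma a * Real.Gamma b / Real.Gamma (a + b)

open Finset

theorem integral_rpow_mul_one_sub_rpow {a b : ℝ} (ha : 0 < a) (hb : 0 < b) :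
    ∫ t in (0:ℝ)..1, t ^ (a - 1) * (1 - t) ^ (b - 1) = betaFn a b := by
  have hcomplex : Complex.betaIntegral a b =
      ↑(∫ t in (0:ℝ)..1, t ^ (a - 1) * (1 - t) ^ (b - 1)) := by
    rw [Complex.betaIntegral, ← intervalIntegral.integral_ofReal]
    refine intervalIntegral.integral_congr fun t ht => ?_
    rw [Set.uIcc_of_le zero_le_one] at ht
    simp only [Complex.ofReal_mul, Complex.ofReal_cpow ht.1,
      Complex.ofReal_cpow (sub_nonneg.2 ht.2)]
    push_cast
    rfl
  rw [← Complex.ofReal_re (∫ t in (0:ℝ)..1, _), ← hcomplex,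
    ← ProbabilityTheory.beta_eq_betaIntegralReal a b ha hb]
  rfl

theorem betaFn_div_betaFn {c : ℝ} (hc : Gamma c ≠ 0) (x y : ℝ) :
    betaFn x c / betaFn y c = Gamma x / Gamma (x + c) * (Gamma (y + c) / Gamma y) := by
  simp only [betaFn]
  field_simp

theorem integral_rpow_mul_one_sub_rpow_div_betaFn {s a c : ℝ} (hsa : 0 < s + a) (hc : 0 < c) :
    (∫ t in (0:ℝ)..1, t ^ (s - 1 + a) * (1 - t) ^ (c - 1)) / betaFn (a + 1) c
      = Gamma (s + a) / Gamma (s + a + c) * (Gamma (a + 1 + c) / Gamma (a + 1)) := by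
  rw [show s - 1 + a = s + a - 1 by ring, integral_rpow_mul_one_sub_rpow hsa hc,
    betaFn_div_betaFn (Gamma_pos_of_pos hc).ne']

theorem prod_two_mul_sin_pi_mul_div {n : ℕ} (hn : n ≠ 0) :
    ∏ k ∈ Ico 1 n, 2 * sin (π * k / n) = n := by
  obtain ⟨m, rfl⟩ : ∃ m, n = m + 1 := ⟨n - 1, by omega⟩
  have hμ := Complex.isPrimitiveRoot_exp (m + 1) hn
  have hnorm := congrArg (‖·‖) hμ.prod_one_sub_pow_eq_order
  simp only [norm_prod] at hnorm
  have hterm : ∀ k ∈ range m, ‖1 - Complex.exp (2 * π * Complex.I / (m + 1 : ℕ)) ^ (k + 1)‖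
      = 2 * sin (π * (1 + k : ℕ) / (m + 1 : ℕ)) := by
    intro k hk
    have hk : ((1 + k : ℕ) : ℝ) ≤ (m + 1 : ℕ) := by
      have := mem_range.mp hk
      exact_mod_cast (by omega : 1 + k ≤ m + 1)
    rw [← Complex.exp_nat_mul, norm_sub_rev,
      show ((k + 1 : ℕ) : ℂ) * (2 * π * Complex.I / (m + 1 : ℕ))
        = Complex.I * ((2 * π * (1 + k : ℕ) / (m + 1 : ℕ) : ℝ) : ℂ) by push_cast; ring,
      Complex.norm_exp_I_mul_ofReal_sub_one, Real.norm_eq_abs, abs_of_nonneg]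
    · ring_nf
    · refine mul_nonneg zero_le_two (sin_nonneg_of_nonneg_of_le_pi (by positivity) ?_)
      rw [show 2 * π * (1 + k : ℕ) / (m + 1 : ℕ) / 2 = π * ((1 + k : ℕ) / (m + 1 : ℕ)) by ring]
      exact mul_le_of_le_one_right pi_pos.le ((div_le_one (by positivity)).2 hk)
  rw [prod_Ico_eq_prod_range, Nat.add_sub_cancel, ← prod_congr rfl hterm, hnorm]
  push_cast
  exact_mod_cast Complex.norm_natCast (m + 1)

theorem prod_Gamma_mul_Gamma_one_sub_div {n : ℕ} (hn : n ≠ 0) :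
    ∏ k ∈ Ico 1 n, Gamma (k / n) * Gamma (1 - k / n) = (2 * π) ^ (n - 1) / n := by
  have hreflect : ∀ k ∈ Ico 1 n,
      Gamma (k / n) * Gamma (1 - k / n) = 2 * π / (2 * sin (π * k / n)) := by
    intro k _
    rw [Gamma_mul_Gamma_one_sub, mul_div_mul_left _ _ two_ne_zero, mul_div_assoc]
  rw [prod_congr rfl hreflect, prod_div_distrib, prod_two_mul_sin_pi_mul_div hn, prod_const,
    Nat.card_Ico]

theorem prod_Gamma_div {n : ℕ} (hn : n ≠ 0) :
    ∏ k ∈ Ico 1 n, Gamma (k / n) = sqrt (2 * π) ^ (n - 1) / sqrt n := by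
  have hpos : 0 < ∏ k ∈ Ico 1 n, Gamma (k / n) :=
    prod_pos fun k hk => Gamma_pos_of_pos (by have := (mem_Ico.1 hk).1; positivity)
  have hsymm : ∏ k ∈ Ico 1 n, Gamma (1 - k / n) = ∏ k ∈ Ico 1 n, Gamma (k / n) :=
    calc ∏ k ∈ Ico 1 n, Gamma (1 - k / n) = ∏ k ∈ Ico 1 n, Gamma ((n - k : ℕ) / n) := by
          refine prod_congr rfl fun k hk => ?_
          rw [Nat.cast_sub (mem_Ico.1 hk).2.le, sub_div, div_self (by positivity)]
      _ = ∏ k ∈ Ico (n + 1 - n) (n + 1 - 1), Gamma (k / n) :=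
          prod_Ico_reflect (fun k : ℕ => Gamma (k / n)) 1 n.le_succ
      _ = ∏ k ∈ Ico 1 n, Gamma (k / n) := by rw [Nat.add_sub_cancel_left, Nat.add_sub_cancel]
  refine (sq_eq_sq₀ hpos.le (by positivity)).1 ?_
  rw [div_pow, pow_right_comm, sq_sqrt (by positivity), sq_sqrt (by positivity),
    ← prod_Gamma_mul_Gamma_one_sub_div hn, prod_mul_distrib, hsymm, sq]

theorem prod_Gamma_div_add_one {n : ℕ} (hn : n ≠ 0) :
    ∏ k ∈ Ico 1 n, Gamma (k / n + 1)
      = (n - 1).factorial / n ^ (n - 1) * (sqrt (2 * π) ^ (n - 1) / sqrt n) := by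
  have hrec : ∀ k ∈ Ico 1 n, Gamma (k / n + 1) = k / n * Gamma (k / n) := fun k hk =>
    Gamma_add_one (by have := (mem_Ico.1 hk).1; positivity)
  obtain ⟨m, rfl⟩ : ∃ m, n = m + 1 := ⟨n - 1, by omega⟩
  rw [prod_congr rfl hrec, prod_mul_distrib, prod_Gamma_div hn, prod_div_distrib, prod_const,
    Nat.card_Ico, ← Nat.cast_prod, prod_Ico_id_eq_factorial, Nat.add_sub_cancel]

theorem prod_Gamma_div_add_one_div_Gamma_div_succ_add_one {m : ℕ} (hm : m ≠ 0) :
    ∏ k ∈ Icc 1 m, Gamma (k / m + 1) / Gamma (k / (m + 1) + 1)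
      = 1 / sqrt (2 * π) * (1 / sqrt ((m + 1) * m)) * ((m + 1) ^ (m + 1) / m ^ m) := by
  obtain ⟨n, rfl⟩ : ∃ n, m = n + 1 := ⟨m - 1, by omega⟩
  have hsucc := prod_Gamma_div_add_one (n := n + 1 + 1) (by omega)
  rw [prod_div_distrib, ← Ico_add_one_right_eq_Icc, prod_Ico_succ_top (by omega),
    div_self (by positivity : ((n + 1 : ℕ) : ℝ) ≠ 0), one_add_one_eq_two, Gamma_two, mul_one,
    prod_Gamma_div_add_one hm]
  push_cast at hsucc ⊢
  rw [hsucc, Nat.factorial_succ, Nat.cast_mul, Nat.cast_succ,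
    sqrt_mul (by positivity : (0 : ℝ) ≤ n + 1 + 1)]
  have hA : 0 < sqrt (2 * π) := by positivity
  have hB : 0 < sqrt ((n : ℝ) + 1) := by positivity
  have hC : 0 < sqrt ((n : ℝ) + 1 + 1) := by positivity
  have hC_sq := mul_self_sqrt (by positivity : (0 : ℝ) ≤ n + 1 + 1)
  generalize sqrt (2 * π) = A at hA ⊢
  generalize sqrt ((n : ℝ) + 1) = B at hB ⊢
  generalize sqrt ((n : ℝ) + 1 + 1) = C at hC hC_sq ⊢
  field_simp
  linear_combination (A ^ (n + 1) * ((n : ℝ) + 1) ^ (n + 1) * ((n : ℝ) + 1 + 1) ^ (n + 1)) * hC_sq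

/-- for an integer `j ≥ 2` and real `s > 0`, the Mellin transform of the
product of the `j−1` independent Beta variables `β_k`:
`Π_{k=1}^{j−1} (∫_0^1 t^{s−1+k/j}(1−t)^{k/(j(j−1))−1} dt)/B(k/j+1, k/(j(j−1)))
  = (2π)^{−1/2}(j(j−1))^{−1/2} · j^j/(j−1)^{j−1} · Π_{k=1}^{j−1} Γ(s+k/j)/Γ(s+k/(j−1))`. -/
theorem beta_product_mellin {j : ℕ} (hj : 2 ≤ j) {s : ℝ} (hs : 0 < s) :
    ∏ k ∈ Finset.Icc 1 (j - 1),
        (∫ t in (0:ℝ)..1,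
            t ^ (s - 1 + (k : ℝ) / (j : ℝ)) *
              (1 - t) ^ ((k : ℝ) / ((j : ℝ) * ((j : ℝ) - 1)) - 1)) /
          betaFn ((k : ℝ) / (j : ℝ) + 1) ((k : ℝ) / ((j : ℝ) * ((j : ℝ) - 1)))
      = (1 / Real.sqrt (2 * π)) * (1 / Real.sqrt ((j : ℝ) * ((j : ℝ) - 1))) *
          ((j : ℝ) ^ j / ((j : ℝ) - 1) ^ (j - 1)) *
          ∏ k ∈ Finset.Icc 1 (j - 1),
            Real.Gamma (s + (k : ℝ) / (j : ℝ)) / Real.Gamma (s + (k : ℝ) / ((j : ℝ) - 1)) := by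
  obtain ⟨m, rfl⟩ : ∃ m, j = m + 1 := ⟨j - 1, by omega⟩
  have hm : (m : ℝ) ≠ 0 := by norm_cast; omega
  simp only [Nat.add_sub_cancel, Nat.cast_succ, add_sub_cancel_right]
  have hfactor : ∀ k ∈ Icc 1 m,
      (∫ t in (0:ℝ)..1, t ^ (s - 1 + k / (m + 1)) * (1 - t) ^ ((k : ℝ) / ((m + 1) * m) - 1)) /
          betaFn (k / (m + 1) + 1) (k / ((m + 1) * m))
        = Gamma (s + k / (m + 1)) / Gamma (s + k / m) *
            (Gamma (k / m + 1) / Gamma (k / (m + 1) + 1)) := by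
    intro k hk
    have hk : (0 : ℝ) < k := by have := (mem_Icc.1 hk).1; positivity
    have hsplit : (k : ℝ) / (m + 1) + k / ((m + 1) * m) = k / m := by field_simp
    rw [integral_rpow_mul_one_sub_rpow_div_betaFn (by positivity) (by positivity), add_assoc s,
      hsplit, add_right_comm, hsplit]
  rw [prod_congr rfl hfactor, prod_mul_distrib,
    prod_Gamma_div_add_one_div_Gamma_div_succ_add_one (by omega)]
  ring
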